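/- arXiv:1605.02441 — 8 statements merged into one kernel-verified Lean document; each statement's English description precedes it below -/
import Mathlib

section
/- Define M(n) for integers n ≥ 0 by M(n) = Σ_{W=0}^{n} P^W · C(W + ⌊(n−W)/(K+1)⌋, W), where P ≥ 1 and K ≥ 0 are fixed integers. Then M satisfies the recurrence M(n) = P·M(n−1) + M(n−K−1) for all n ≥ K+1, with initial values M(n) = 1 + P + ⋯ + P^n for 0 ≤ n ≤ K. -/
open Finset

/-!
Split off the `W = 0` term and apply Pascal's rule
`C(W + 1 + q, W + 1) = C(W + q, W) + C(W + q, W + 1)` to the others: the first parts sum to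
`P · M(n - 1)`, and the second parts are, after the shift `W ↦ W + 1` and the identity
`⌊(m + K + 1)/(K + 1)⌋ = ⌊m/(K + 1)⌋ + 1`, exactly the terms of `M(n - K - 1)` with `W ≥ 1`.
-/

def shiftCodeSize (P K n : ℕ) : ℕ :=
  ∑ W ∈ range (n + 1), P ^ W * Nat.choose (W + (n - W) / (K + 1)) W

namespace shiftCodeSize

variable (P K : ℕ)

theorem eq_geom_sum {n : ℕ} (hn : n ≤ K) : shiftCodeSize P K n = ∑ i ∈ range (n + 1), P ^ i := by
  refine sum_congr rfl fun W hW => ?_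
  rw [Nat.div_eq_of_lt (by grind), add_zero, Nat.choose_self, mul_one]

theorem succ_eq (m : ℕ) :
    shiftCodeSize P K (m + 1) = 1 + P * shiftCodeSize P K m +
      ∑ W ∈ range (m + 1), P ^ (W + 1) * Nat.choose (W + (m - W) / (K + 1)) (W + 1) := by
  have pascal (W : ℕ) :
      P ^ (W + 1) * Nat.choose (W + 1 + (m + 1 - (W + 1)) / (K + 1)) (W + 1) =
        P * (P ^ W * Nat.choose (W + (m - W) / (K + 1)) W) +
          P ^ (W + 1) * Nat.choose (W + (m - W) / (K + 1)) (W + 1) := by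
    rw [Nat.add_sub_add_right, add_right_comm, Nat.choose_succ_succ, pow_succ]
    ring
  rw [shiftCodeSize, sum_range_succ', sum_congr rfl fun W _ => pascal W, sum_add_distrib,
    shiftCodeSize, mul_sum]
  simp only [pow_zero, Nat.choose_zero_right, mul_one]
  ring

theorem eq_one_add_sum (j : ℕ) :
    shiftCodeSize P K j = 1 +
      ∑ W ∈ range (j + K + 1), P ^ (W + 1) * Nat.choose (W + (j + K - W) / (K + 1)) (W + 1) := by
  have shifted_term {W : ℕ} (hW : W < j) :
      W + (j + K - W) / (K + 1) = W + 1 + (j - (W + 1)) / (K + 1) := by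
    rw [show j + K - W = j - (W + 1) + (K + 1) by omega, Nat.add_div_right _ K.succ_pos]
    ring
  have vanishing_term {i : ℕ} (hi : i < K + 1) :
      Nat.choose (j + i + (j + K - (j + i)) / (K + 1)) (j + i + 1) = 0 := by
    rw [Nat.div_eq_of_lt (by omega), add_zero, Nat.choose_succ_self]
  have tail_vanishes :
      ∑ i ∈ range (K + 1), P ^ (j + i + 1) *
        Nat.choose (j + i + (j + K - (j + i)) / (K + 1)) (j + i + 1) = 0 :=
    sum_eq_zero fun i hi => by rw [vanishing_term (mem_range.1 hi), mul_zero]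
  rw [shiftCodeSize, sum_range_succ', add_assoc, sum_range_add, tail_vanishes, add_zero,
    sum_congr rfl fun W hW => by rw [← shifted_term (mem_range.1 hW)]]
  simp only [pow_zero, Nat.choose_zero_right, mul_one]
  ring

theorem add_succ (j : ℕ) :
    shiftCodeSize P K (j + K + 1) = P * shiftCodeSize P K (j + K) + shiftCodeSize P K j := by
  rw [succ_eq, eq_one_add_sum P K j]
  ring

end shiftCodeSize

theorem shift_code_size_recurrence_general (P K : ℕ) (M : ℕ → ℕ)
    (hM : ∀ n, M n = ∑ W ∈ range (n + 1), P ^ W * Nat.choose (W + (n - W) / (K + 1)) W) :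
    (∀ n, K + 1 ≤ n → M n = P * M (n - 1) + M (n - K - 1)) ∧
    (∀ n, n ≤ K → M n = ∑ i ∈ range (n + 1), P ^ i) := by
  obtain rfl : M = shiftCodeSize P K := funext hM
  refine ⟨fun n hn => ?_, fun n hn => shiftCodeSize.eq_geom_sum P K hn⟩
  obtain ⟨j, rfl⟩ : ∃ j, n = j + K + 1 := ⟨n - (K + 1), by omega⟩
  rw [show j + K + 1 - 1 = j + K by omega, show j + K + 1 - K - 1 = j by omega]
  exact shiftCodeSize.add_succ P K j

/-- `M(n) = Σ_{W=0}^n P^W C(W + ⌊(n−W)/(K+1)⌋, W)` satisfies the recurrence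
`M(n) = P·M(n−1) + M(n−K−1)` for `n ≥ K+1`, with `M(n) = 1 + P + ⋯ + P^n` for `n ≤ K`. -/
theorem shift_code_size_recurrence (P K : ℕ) (hP : 1 ≤ P) (M : ℕ → ℕ)
    (hM : ∀ n, M n = ∑ W ∈ range (n + 1), P ^ W * Nat.choose (W + (n - W) / (K + 1)) W) :
    (∀ n, K + 1 ≤ n → M n = P * M (n - 1) + M (n - K - 1)) ∧
    (∀ n, n ≤ K → M n = ∑ i ∈ range (n + 1), P ^ i) :=
  shift_code_size_recurrence_general P K M hM
end

section
/- Let P ≥ 1, K ≥ 0 be integers and let r be the unique positive real root of x^(K+1) − P·x^K − 1. Define M(n) by M(n) = P·M(n−1) + M(n−K−1) for n ≥ K+1 and M(n) = 1 + P + ⋯ + P^n for 0 ≤ n ≤ K. Then lim_{n→∞} (1/n)·log₂ M(n) = log₂ r. -/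
/-!
Both `n ↦ M n` and `n ↦ c * r ^ n` solve the recurrence `u (n + K + 1) = P * u (n + K) + u n`,
the latter because `r` is a root of the characteristic polynomial. The coefficients are
nonnegative, so an inequality between two solutions on the first `K + 1` terms propagates to all
terms. Comparing with `r ^ (n - K)` from below and `(K + 1) * r ^ n` from above gives
`log M n = n log r + O(1)`.
-/

open Filter Finset Real

def IsShiftSolution (P : ℝ) (K : ℕ) (u : ℕ → ℝ) : Prop :=
  ∀ n, u (n + K + 1) = P * u (n + K) + u n

theorem IsShiftSolution.le_of_forall_le_initial {P : ℝ} {K : ℕ} {u v : ℕ → ℝ} (hP : 0 ≤ P)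
    (hu : IsShiftSolution P K u) (hv : IsShiftSolution P K v) (hinit : ∀ n ≤ K, u n ≤ v n) :
    ∀ n, u n ≤ v n := by
  intro n
  induction n using Nat.strong_induction_on with
  | _ n ih =>
    rcases le_or_gt n K with hn | hn
    · exact hinit n hn
    · obtain ⟨m, rfl⟩ : ∃ m, n = m + K + 1 := ⟨n - (K + 1), by omega⟩
      rw [hu m, hv m]
      gcongr
      · exact ih _ (by omega)
      · exact ih _ (by omega)

theorem isShiftSolution_const_mul_pow {P r : ℝ} {K : ℕ} (hroot : r ^ (K + 1) = P * r ^ K + 1)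
    (c : ℝ) : IsShiftSolution P K (fun n ↦ c * r ^ n) := by
  intro n
  calc c * r ^ (n + K + 1) = c * r ^ n * r ^ (K + 1) := by ring
    _ = P * (c * r ^ (n + K)) + c * r ^ n := by rw [hroot]; ring

theorem lt_of_pow_succ_eq_mul_pow_add_one {P r : ℝ} {K : ℕ} (hr : 0 < r)
    (hroot : r ^ (K + 1) = P * r ^ K + 1) : P < r := by
  have hrK : 0 < r ^ K := pow_pos hr K
  nlinarith [pow_succ r K]

theorem sum_range_pow_le_mul_pow {a b : ℝ} (ha : 0 ≤ a) (hab : a ≤ b) (hb : 1 ≤ b) (n : ℕ) :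
    ∑ i ∈ range (n + 1), a ^ i ≤ (n + 1) * b ^ n := by
  calc ∑ i ∈ range (n + 1), a ^ i ≤ ∑ _i ∈ range (n + 1), b ^ n := by
        refine sum_le_sum fun i hi ↦ (pow_le_pow_left₀ ha hab i).trans ?_
        exact pow_le_pow_right₀ hb (Nat.lt_succ_iff.mp (mem_range.mp hi))
    _ = (n + 1) * b ^ n := by simp

theorem tendsto_log_div_of_le_mul_pow {f : ℕ → ℝ} {c C r : ℝ} (hc : 0 < c) (hr : 0 < r)
    (hlow : ∀ n, c * r ^ n ≤ f n) (hup : ∀ n, f n ≤ C * r ^ n) :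
    Tendsto (fun n : ℕ ↦ log (f n) / n) atTop (nhds (log r)) := by
  have hf (n : ℕ) : 0 < f n := (by positivity : 0 < c * r ^ n).trans_le (hlow n)
  have hlog_low (n : ℕ) : log c + n * log r ≤ log (f n) := by
    rw [← log_pow, ← log_mul hc.ne' (by positivity)]
    exact log_le_log (by positivity) (hlow n)
  have hlog_up (n : ℕ) : log (f n) ≤ log C + n * log r := by
    have hC : 0 < C := by simpa using (hf 0).trans_le (hup 0)
    rw [← log_pow, ← log_mul hC.ne' (by positivity)]
    exact log_le_log (hf n) (hup n)
  have hlim (a : ℝ) : Tendsto (fun n : ℕ ↦ a / n + log r) atTop (nhds (log r)) := by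
    simpa using (tendsto_const_div_atTop_nhds_zero_nat a).add_const (log r)
  refine tendsto_of_tendsto_of_tendsto_of_le_of_le' (hlim (log c)) (hlim (log C)) ?_ ?_
  all_goals
    filter_upwards [eventually_gt_atTop 0] with n hn
    have hn' : (0 : ℝ) < n := by exact_mod_cast hn
    rw [div_add' _ _ _ hn'.ne']
    gcongr
    linarith [hlog_low n, hlog_up n]

theorem tendsto_logb_div_of_le_mul_pow {f : ℕ → ℝ} {c C r : ℝ} (b : ℝ) (hc : 0 < c) (hr : 0 < r)
    (hlow : ∀ n, c * r ^ n ≤ f n) (hup : ∀ n, f n ≤ C * r ^ n) :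
    Tendsto (fun n : ℕ ↦ logb b (f n) / n) atTop (nhds (logb b r)) := by
  simpa only [← log_div_log, div_right_comm] using
    (tendsto_log_div_of_le_mul_pow hc hr hlow hup).div_const (log b)

/-- The zero-error capacity of the shift channel: the exponential growth rate of the optimal
code sizes `M(n)` is `log₂ r`, where `r` is the unique positive root of `x^(K+1) − P·x^K − 1`. -/
theorem shift_channel_capacity (P K : ℕ) (hP : 1 ≤ P) (r : ℝ) (hr : 0 < r)
    (hroot : r ^ (K + 1) - (P : ℝ) * r ^ K - 1 = 0)
    (M : ℕ → ℕ)
    (hMinit : ∀ n, n ≤ K → M n = ∑ i ∈ range (n + 1), P ^ i)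
    (hMrec : ∀ n, K + 1 ≤ n → M n = P * M (n - 1) + M (n - K - 1)) :
    Tendsto (fun n : ℕ => (1 / (n : ℝ)) * Real.logb 2 (M n)) atTop (nhds (Real.logb 2 r)) := by
  have hroot' : r ^ (K + 1) = P * r ^ K + 1 := by linarith
  have hPr : (P : ℝ) < r := lt_of_pow_succ_eq_mul_pow_add_one hr hroot'
  have hr1 : 1 ≤ r := (Nat.one_le_cast.mpr hP).trans hPr.le
  have hM : IsShiftSolution P K (fun n ↦ (M n : ℝ)) := fun n ↦ by
    have h := hMrec (n + K + 1) (by omega)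
    rw [show n + K + 1 - 1 = n + K by omega, show n + K + 1 - K - 1 = n by omega] at h
    dsimp only
    exact_mod_cast h
  have hM_init (n : ℕ) (hn : n ≤ K) : (M n : ℝ) = ∑ i ∈ range (n + 1), (P : ℝ) ^ i := by
    exact_mod_cast hMinit n hn
  have hlow := (isShiftSolution_const_mul_pow hroot' (r ^ K)⁻¹).le_of_forall_le_initial
    (Nat.cast_nonneg P) hM fun n hn ↦ by
      calc (r ^ K)⁻¹ * r ^ n ≤ 1 := by
            rw [inv_mul_le_one₀ (by positivity)]; exact pow_le_pow_right₀ hr1 hn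
        _ ≤ M n := by
            rw [hM_init n hn, sum_range_succ', pow_zero]
            exact le_add_of_nonneg_left (by positivity)
  have hup := hM.le_of_forall_le_initial (Nat.cast_nonneg P)
    (isShiftSolution_const_mul_pow hroot' (K + 1)) fun n hn ↦ by
      rw [hM_init n hn]
      exact (sum_range_pow_le_mul_pow (Nat.cast_nonneg P) hPr.le hr1 n).trans (by gcongr)
  simpa only [one_div_mul_eq_div] using
    tendsto_logb_div_of_le_mul_pow 2 (by positivity) hr hlow hup
end

section
/- Every complex root ρ of x^(K+1) − P·x^K − 1 other than the unique positive real root r satisfies |ρ| < r. -/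
/-!
Both roots satisfy `x ^ K * (x - P) = 1`. If `r ≤ ‖z‖`, monotonicity of `x ↦ x ^ K * (x - P)` on
`[P, ∞)` gives `‖z - P‖ ≤ ‖z‖ - P`, i.e. equality in the triangle inequality
`‖z‖ ≤ ‖z - P‖ + P`. Since `P > 0` this forces `z` onto the positive real axis, and then strict
monotonicity forces `z = r`.
-/

theorem Complex.eq_norm_of_norm_sub_ofReal_le {z : ℂ} {a : ℝ} (ha : 0 < a)
    (h : ‖z - a‖ ≤ ‖z‖ - a) : z = ‖z‖ := by
  have hsq : ‖z - a‖ ^ 2 = ‖z‖ ^ 2 - 2 * a * z.re + a ^ 2 := by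
    simp only [Complex.sq_norm, Complex.normSq_apply, Complex.sub_re, Complex.sub_im,
      Complex.ofReal_re, Complex.ofReal_im]
    ring
  have hre : z.re = ‖z‖ := by
    nlinarith [Complex.re_le_norm z, norm_nonneg (z - a)]
  have him : z.im = 0 := Complex.abs_re_eq_norm.mp (by rw [hre, abs_norm])
  exact Complex.ext (by simpa using hre) (by simpa using him)

theorem strictMonoOn_pow_mul_sub (K : ℕ) {c : ℝ} (hc : 0 ≤ c) :
    StrictMonoOn (fun x : ℝ => x ^ K * (x - c)) (Set.Ici c) := by
  intro x hx y hy hxy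
  have hy : 0 < y := by simp only [Set.mem_Ici] at hx; linarith
  calc x ^ K * (x - c) ≤ y ^ K * (x - c) := by
        gcongr
        · exact sub_nonneg.mpr hx
        · exact hc.trans hx
    _ < y ^ K * (y - c) := by gcongr

theorem nonpositive_roots_smaller_modulus_general (P K : ℕ) (hP : 1 ≤ P)
    (r : ℝ) (hr : 0 < r) (hroot : r ^ (K + 1) - (P : ℝ) * r ^ K - 1 = 0)
    (z : ℂ) (hz : z ^ (K + 1) - (P : ℂ) * z ^ K - 1 = 0) (hzr : z ≠ (r : ℂ)) :
    ‖z‖ < r := by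
  have hr_eq : r ^ K * (r - P) = 1 := by linear_combination hroot
  have hPr : (P : ℝ) ≤ r := by nlinarith [pow_pos hr K]
  have hz_eq : ‖z‖ ^ K * ‖z - P‖ = 1 := by
    simpa using congrArg norm (show z ^ K * (z - P) = 1 by linear_combination hz)
  have hmono := strictMonoOn_pow_mul_sub K (Nat.cast_nonneg P)
  by_contra! hrz
  have hle : ‖z - P‖ ≤ ‖z‖ - P := by
    refine le_of_mul_le_mul_left ?_ (pow_pos (hr.trans_le hrz) K)
    rw [hz_eq, ← hr_eq]
    exact hmono.monotoneOn hPr (hPr.trans hrz) hrz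
  have hz_real : z = ‖z‖ := Complex.eq_norm_of_norm_sub_ofReal_le (by exact_mod_cast hP) hle
  have hnorm_eq : ‖z‖ ^ K * (‖z‖ - P) = 1 := by
    rw [hz_real] at hz
    exact_mod_cast (by push_cast; linear_combination hz : ((‖z‖ ^ K * (‖z‖ - P) : ℝ) : ℂ) = 1)
  exact hzr (by rw [hz_real, hmono.injOn (hPr.trans hrz) hPr (hnorm_eq.trans hr_eq.symm)])

/-- Every complex root of `x^(K+1) − P·x^K − 1` other than the unique positive real root `r`
has modulus strictly less than `r`. -/
theorem nonpositive_roots_smaller_modulus (P K : ℕ) (hP : 1 ≤ P) (hK : 1 ≤ K)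
    (r : ℝ) (hr : 0 < r) (hroot : r ^ (K + 1) - (P : ℝ) * r ^ K - 1 = 0)
    (z : ℂ) (hz : z ^ (K + 1) - (P : ℂ) * z ^ K - 1 = 0) (hzr : z ≠ (r : ℂ)) :
    ‖z‖ < r :=
  nonpositive_roots_smaller_modulus_general P K hP r hr hroot z hz hzr
end

section
/- Let K ≥ 0 and P ≥ 1 be fixed and let r(K) be the unique positive root of x^(K+1) − P·x^K − 1 as a function of real K ≥ 0. Then r(0) = P + 1, r is strictly decreasing in K, and lim_{K→∞} r(K) = P. -/
/-!
Rewrite the equation as `r ^ K * (r - P) = 1`, which forces `r > P`. The map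
`x ↦ x ^ K * (x - P)` is strictly increasing in `x` on `(P, ∞)`, and strictly increasing in `K`
once `x > 1`; so for `K₁ < K₂` the root `r K₂` gives a value below `1` at exponent `K₁`, hence
lies below `r K₁`. For the limit, `(P + ε) ^ K * ε → ∞`, so eventually the value at `P + ε`
exceeds `1` and `r K < P + ε`.
-/

open Filter Set

lemma rpow_add_one_sub_mul_rpow_sub_one_eq_zero_iff {P K x : ℝ} (hx : 0 < x) :
    x ^ (K + 1) - P * x ^ K - 1 = 0 ↔ x ^ K * (x - P) = 1 := by
  rw [Real.rpow_add_one hx.ne']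
  constructor <;> intro h <;> linarith

lemma lt_of_rpow_mul_sub_eq_one {P K x : ℝ} (hx : 0 < x) (h : x ^ K * (x - P) = 1) : P < x := by
  have hpos : 0 < x ^ K * (x - P) := h ▸ one_pos
  exact sub_pos.1 (pos_of_mul_pos_right hpos (Real.rpow_pos_of_pos hx K).le)

lemma strictMonoOn_rpow_mul_sub {P K : ℝ} (hP : 0 ≤ P) (hK : 0 ≤ K) :
    StrictMonoOn (fun x : ℝ => x ^ K * (x - P)) (Ioi P) := by
  intro x hx y hy hxy
  have hx0 : 0 < x := hP.trans_lt hx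
  exact mul_lt_mul' (Real.rpow_le_rpow hx0.le hxy.le hK) (sub_lt_sub_right hxy P)
    (sub_pos.2 hx).le (Real.rpow_pos_of_pos (hx0.trans hxy) K)

/-- As a function of real `K ≥ 0`, the unique positive root `r(K)` of `x^(K+1) − P·x^K − 1`
satisfies `r(0) = P + 1`, is strictly decreasing, and tends to `P` as `K → ∞`. -/
theorem root_as_function_of_K (P : ℝ) (hP : 1 ≤ P) (r : ℝ → ℝ)
    (hr : ∀ K : ℝ, 0 ≤ K → 0 < r K ∧ (r K) ^ (K + 1) - P * (r K) ^ K - 1 = 0) :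
    r 0 = P + 1 ∧ StrictAntiOn r (Set.Ici 0) ∧ Tendsto r atTop (nhds P) := by
  have hroot : ∀ K : ℝ, 0 ≤ K → r K ^ K * (r K - P) = 1 := fun K hK =>
    (rpow_add_one_sub_mul_rpow_sub_one_eq_zero_iff (hr K hK).1).1 (hr K hK).2
  have hgt : ∀ K : ℝ, 0 ≤ K → P < r K := fun K hK =>
    lt_of_rpow_mul_sub_eq_one (hr K hK).1 (hroot K hK)
  have hmono : ∀ K : ℝ, 0 ≤ K → StrictMonoOn (fun x : ℝ => x ^ K * (x - P)) (Ioi P) :=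
    fun K => strictMonoOn_rpow_mul_sub (zero_le_one.trans hP)
  refine ⟨?_, ?_, ?_⟩
  · have h0 := hroot 0 le_rfl
    rw [Real.rpow_zero, one_mul] at h0
    linarith
  · intro K₁ hK₁ K₂ hK₂ hlt
    have hK_mono := (Real.strictMono_rpow_of_base_gt_one (hP.trans_lt (hgt K₂ hK₂))).mul_const
      (sub_pos.2 (hgt K₂ hK₂))
    refine ((hmono K₁ hK₁).lt_iff_lt (hgt K₂ hK₂) (hgt K₁ hK₁)).1 ?_
    calc r K₂ ^ K₁ * (r K₂ - P) < r K₂ ^ K₂ * (r K₂ - P) := hK_mono hlt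
      _ = r K₁ ^ K₁ * (r K₁ - P) := by rw [hroot K₂ hK₂, hroot K₁ hK₁]
  · refine tendsto_order.2 ⟨fun a ha => ?_, fun b hb => ?_⟩
    · filter_upwards [eventually_ge_atTop 0] with K hK using ha.trans (hgt K hK)
    have hb_tendsto : Tendsto (fun K : ℝ => b ^ K * (b - P)) atTop atTop :=
      (tendsto_rpow_atTop_of_base_gt_one b (hP.trans_lt hb)).atTop_mul_const (sub_pos.2 hb)
    filter_upwards [eventually_ge_atTop 0, hb_tendsto.eventually_gt_atTop 1] with K hK hK1
    exact ((hmono K hK).lt_iff_lt (hgt K hK) hb).1 (hroot K hK ▸ hK1)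
end

section
/- Define R(w) = ((wK+1)/(K+1))·H(w(K+1)/(wK+1)) + w·log₂ P for w ∈ [0,1], where H is the binary entropy function. Then R is concave on [0,1]. -/
/-- Binary entropy function to base 2 (with value 0 at the endpoints, since `logb 2 0 = 0`). -/
noncomputable def binH (p : ℝ) : ℝ := -p * Real.logb 2 p - (1 - p) * Real.logb 2 (1 - p)

/-!
With `a = w(K+1)` and `b = 1 - w`, so that `a + b = wK + 1`, the entropy term of `R` is
`(a + b) H(a / (a + b)) / (K + 1)`, and `(a + b) H(a / (a + b)) ln 2 = φ a + φ b - φ (a + b)`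
for `φ x = -x ln x`. Hence `R` is a positive multiple of
`G w = φ(w(K+1)) + φ(1-w) - φ(wK+1)` plus a linear term, and
`G'' w = -(K+1)/w - 1/(1-w) + K²/(wK+1) ≤ 0` because `K² w ≤ (K+1)(wK+1)`.
-/

open Real Set

lemma binH_mul_log_two (p : ℝ) : binH p * log 2 = negMulLog p + negMulLog (1 - p) := by
  have : log 2 ≠ 0 := by positivity
  simp only [binH, negMulLog, logb]
  field_simp
  ring

lemma mul_binH_div_mul_log_two (a b : ℝ) :
    (a + b) * binH (a / (a + b)) * log 2 = negMulLog a + negMulLog b - negMulLog (a + b) := by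
  rcases eq_or_ne (a + b) 0 with hs | hs
  · obtain rfl : b = -a := by linarith
    simp [negMulLog]
  · have hb : 1 - a / (a + b) = b / (a + b) := by field_simp; ring
    have hφa := negMulLog_mul (a + b) (a / (a + b))
    have hφb := negMulLog_mul (a + b) (b / (a + b))
    rw [mul_div_cancel₀ _ hs] at hφa hφb
    rw [mul_assoc, binH_mul_log_two, hb]
    have : (a / (a + b) + b / (a + b)) = 1 := by field_simp
    linear_combination -hφa - hφb - negMulLog (a + b) * this

lemma hasDerivAt_negMulLog_affine {a b x : ℝ} (h : x * a + b ≠ 0) :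
    HasDerivAt (fun w => negMulLog (w * a + b)) (a * (-log (x * a + b) - 1)) x := by
  have hlin : HasDerivAt (fun w => w * a + b) a x := by
    simpa using ((hasDerivAt_id x).mul_const a).add_const b
  exact ((hasDerivAt_negMulLog h).comp x hlin).congr_deriv (mul_comm _ _)

lemma hasDerivAt_deriv_negMulLog_affine {a b x : ℝ} (h : x * a + b ≠ 0) :
    HasDerivAt (fun w => a * (-log (w * a + b) - 1)) (-a ^ 2 / (x * a + b)) x := by
  have hlin : HasDerivAt (fun w => w * a + b) a x := by
    simpa using ((hasDerivAt_id x).mul_const a).add_const b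
  refine (((hlin.log h).neg.sub_const 1).const_mul a).congr_deriv ?_
  ring

lemma concaveOn_negMulLog_mix {k : ℝ} (hk : 0 ≤ k) :
    ConcaveOn ℝ (Icc 0 1)
      fun w => negMulLog (w * (k + 1)) + negMulLog (1 - w) - negMulLog (w * k + 1) := by
  have hne : ∀ x ∈ interior (Icc (0 : ℝ) 1),
      x * (k + 1) + 0 ≠ 0 ∧ x * -1 + 1 ≠ 0 ∧ x * k + 1 ≠ 0 := by
    intro x hx
    obtain ⟨hx0, hx1⟩ : x ∈ Ioo 0 1 := by rwa [interior_Icc] at hx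
    exact ⟨by nlinarith, by linarith, by nlinarith⟩
  -- each term in the `w * a + b` shape of the two derivative lemmas above
  refine (concaveOn_of_hasDerivWithinAt2_nonpos (convex_Icc 0 1)
    (f := fun w => negMulLog (w * (k + 1) + 0) + negMulLog (w * -1 + 1) - negMulLog (w * k + 1))
    (f' := fun x => (k + 1) * (-log (x * (k + 1) + 0) - 1) + -1 * (-log (x * -1 + 1) - 1)
      - k * (-log (x * k + 1) - 1))
    (f'' := fun x => -(k + 1) ^ 2 / (x * (k + 1) + 0) + -(-1) ^ 2 / (x * -1 + 1)
      - -k ^ 2 / (x * k + 1)) ?_ ?_ ?_ ?_).congr ?_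
  · fun_prop
  · intro x hx
    obtain ⟨h₁, h₂, h₃⟩ := hne x hx
    exact (((hasDerivAt_negMulLog_affine h₁).add (hasDerivAt_negMulLog_affine h₂)).sub
      (hasDerivAt_negMulLog_affine h₃)).hasDerivWithinAt
  · intro x hx
    obtain ⟨h₁, h₂, h₃⟩ := hne x hx
    exact (((hasDerivAt_deriv_negMulLog_affine h₁).add (hasDerivAt_deriv_negMulLog_affine h₂)).sub
      (hasDerivAt_deriv_negMulLog_affine h₃)).hasDerivWithinAt
  · intro x hx
    obtain ⟨hx0, hx1⟩ : x ∈ Ioo 0 1 := by rwa [interior_Icc] at hx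
    have hkey : k ^ 2 / (x * k + 1) ≤ (k + 1) / x := by
      rw [div_le_div_iff₀ (by nlinarith) hx0]
      nlinarith
    have h₁ : (k + 1) ^ 2 / (x * (k + 1) + 0) = (k + 1) / x := by
      rw [add_zero]; field_simp
    have h₂ : (-1) ^ 2 / (x * -1 + 1) = 1 / (1 - x) := by ring
    have h₃ : 0 < 1 / (1 - x) := one_div_pos.mpr (by linarith)
    rw [neg_div, neg_div, neg_div, h₁, h₂]
    linarith
  · intro w _
    simp only [add_zero, mul_neg_one, neg_add_eq_sub]

theorem constant_weight_capacity_concave_general (P K : ℕ) :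
    ConcaveOn ℝ (Set.Icc (0 : ℝ) 1)
      (fun w : ℝ =>
        ((w * K + 1) / (K + 1)) * binH (w * (K + 1) / (w * K + 1)) + w * Real.logb 2 P) := by
  have hentropy := (concaveOn_negMulLog_mix K.cast_nonneg).smul
    (c := ((K + 1) * log 2)⁻¹) (by positivity)
  have hlinear := (LinearMap.smulRight (LinearMap.id : ℝ →ₗ[ℝ] ℝ) (logb 2 P)).concaveOn
    (convex_Icc (0 : ℝ) 1)
  refine (hentropy.add hlinear).congr fun w _ => ?_
  have hH := mul_binH_div_mul_log_two (w * (K + 1)) (1 - w)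
  rw [show w * (K + 1) + (1 - w) = w * K + 1 by ring] at hH
  simp only [Pi.add_apply, smul_eq_mul, LinearMap.smulRight_apply, LinearMap.id_apply, ← hH]
  field_simp

/-- The constant-weight zero-error capacity
`R(w) = ((wK+1)/(K+1))·H(w(K+1)/(wK+1)) + w·log₂ P` is concave on `[0,1]`. -/
theorem constant_weight_capacity_concave (P K : ℕ) (hP : 1 ≤ P) :
    ConcaveOn ℝ (Set.Icc (0 : ℝ) 1)
      (fun w : ℝ =>
        ((w * K + 1) / (K + 1)) * binH (w * (K + 1) / (w * K + 1)) + w * Real.logb 2 P) :=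
  constant_weight_capacity_concave_general P K
end

section
/- Let P ≥ 1, K ≥ 0, and let r be the unique positive root of x^(K+1) − P·x^K − 1. Set w* = P/((K+1)(r−P) + P). Then 0 < w* < 1, w* satisfies the stationarity equation ((w*K+1)/(w*(K+1)))·((1−w*)/(w*K+1))^{1/(K+1)}·P = 1, and the maximum over w ∈ [0,1] of R(w) = ((wK+1)/(K+1))·H(w(K+1)/(wK+1)) + w·log₂ P equals log₂ r and is attained at w*. -/
/-!
Write `c(x) = (xK+1)/(K+1)` and `p(x) = x(K+1)/(xK+1)`, so that `c p = x` and
`c (1-p) = (1-x)/(K+1)`. Gibbs' inequality bounds `H(p)` by the cross entropy of `p` against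
`q = P/r`; multiplying by `c` bounds `R(x)` by a function affine in `x`, and since
`1 - P/r = r^{-(K+1)}` by the root equation, that function is the constant `log₂ r`.
Equality holds where `p(x) = q`, which is exactly `x = w*`.
-/

open Real

noncomputable def shiftRate (P : ℝ) (K : ℕ) (w : ℝ) : ℝ :=
  ((w * K + 1) / (K + 1)) * binH (w * (K + 1) / (w * K + 1)) + w * logb 2 P

lemma sub_le_mul_log_sub_mul_log {a b : ℝ} (ha : 0 ≤ a) (hb : 0 < b) :
    a - b ≤ a * log a - a * log b := by
  rcases ha.eq_or_lt with rfl | ha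
  · simpa using hb.le
  · have hlog : log (b / a) ≤ b / a - 1 := log_le_sub_one_of_pos (by positivity)
    rw [log_div hb.ne' ha.ne'] at hlog
    have hab : a * (b / a) = b := by field_simp
    nlinarith [mul_le_mul_of_nonneg_left hlog ha.le]

lemma binH_le_crossEntropy {p q : ℝ} (hp₀ : 0 ≤ p) (hp₁ : p ≤ 1) (hq₀ : 0 < q) (hq₁ : q < 1) :
    binH p ≤ -p * logb 2 q - (1 - p) * logb 2 (1 - q) := by
  have h₁ := sub_le_mul_log_sub_mul_log hp₀ hq₀
  have h₂ := sub_le_mul_log_sub_mul_log (sub_nonneg.2 hp₁) (sub_pos.2 hq₁)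
  calc binH p = (-p * log p - (1 - p) * log (1 - p)) / log 2 := by simp only [binH, logb]; ring
    _ ≤ (-p * log q - (1 - p) * log (1 - q)) / log 2 := by gcongr ?_ / _; linarith
    _ = -p * logb 2 q - (1 - p) * logb 2 (1 - q) := by simp only [logb]; ring

lemma mul_crossEntropy_eq {x : ℝ} (K : ℕ) (hx : 0 ≤ x) (a b : ℝ) :
    (x * K + 1) / (K + 1) * (-(x * (K + 1) / (x * K + 1)) * a
      - (1 - x * (K + 1) / (x * K + 1)) * b) = -x * a - (1 - x) / (K + 1) * b := by
  have : (0 : ℝ) < x * K + 1 := by positivity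
  field_simp
  ring

lemma shiftRate_le {P q x : ℝ} {K : ℕ} (hx₀ : 0 ≤ x) (hx₁ : x ≤ 1) (hq₀ : 0 < q) (hq₁ : q < 1) :
    shiftRate P K x ≤ -x * logb 2 q - (1 - x) / (K + 1) * logb 2 (1 - q) + x * logb 2 P := by
  have hd : (0 : ℝ) < x * K + 1 := by positivity
  have hp₁ : x * (K + 1) / (x * K + 1) ≤ 1 := by rw [div_le_one hd]; linarith
  rw [shiftRate, ← mul_crossEntropy_eq K hx₀]
  gcongr
  exact binH_le_crossEntropy (by positivity) hp₁ hq₀ hq₁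

lemma shiftRate_eq {P q x : ℝ} {K : ℕ} (hx : 0 ≤ x) (hq : x * (K + 1) / (x * K + 1) = q) :
    shiftRate P K x = -x * logb 2 q - (1 - x) / (K + 1) * logb 2 (1 - q) + x * logb 2 P := by
  rw [shiftRate, binH, ← mul_crossEntropy_eq K hx, hq]

section Root

variable {P r : ℝ} {K : ℕ}

lemma lt_of_root (hr : 0 < r) (hroot : r ^ (K + 1) - P * r ^ K - 1 = 0) : P < r := by
  have : r ^ K * (r - P) = 1 := by linear_combination hroot
  nlinarith [pow_pos hr K]

lemma one_sub_div_of_root (hr : 0 < r) (hroot : r ^ (K + 1) - P * r ^ K - 1 = 0) :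
    1 - P / r = (r ^ (K + 1))⁻¹ := by
  field_simp
  linear_combination r * hroot

lemma majorant_eq_logb_root (hP : 0 < P) (hr : 0 < r)
    (hroot : r ^ (K + 1) - P * r ^ K - 1 = 0) (x : ℝ) :
    -x * logb 2 (P / r) - (1 - x) / (K + 1) * logb 2 (1 - P / r) + x * logb 2 P = logb 2 r := by
  rw [one_sub_div_of_root hr hroot, logb_inv, logb_pow, logb_div hP.ne' hr.ne']
  field_simp
  push_cast
  ring

end Root

section OptimalWeight

variable {P r : ℝ} {K : ℕ}

lemma optimalWeight_mul_add_one (hD : ((K + 1) * (r - P) + P) ≠ 0) :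
    P / ((K + 1) * (r - P) + P) * K + 1 = (K + 1) * r / ((K + 1) * (r - P) + P) := by
  field_simp
  ring

lemma optimalWeight_ratio (hr : r ≠ 0) (hD : ((K + 1) * (r - P) + P) ≠ 0) :
    P / ((K + 1) * (r - P) + P) * (K + 1) / (P / ((K + 1) * (r - P) + P) * K + 1) = P / r := by
  rw [optimalWeight_mul_add_one hD]
  field_simp

lemma one_sub_optimalWeight_div (hr : r ≠ 0) (hD : ((K + 1) * (r - P) + P) ≠ 0) :
    (1 - P / ((K + 1) * (r - P) + P)) / (P / ((K + 1) * (r - P) + P) * K + 1) = 1 - P / r := by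
  rw [optimalWeight_mul_add_one hD]
  field_simp
  ring

end OptimalWeight

lemma inv_pow_succ_rpow_inv {r : ℝ} (hr : 0 ≤ r) (K : ℕ) :
    ((r ^ (K + 1))⁻¹) ^ (1 / ((K : ℝ) + 1)) = r⁻¹ := by
  rw [← inv_pow, one_div, ← Nat.cast_add_one]
  exact pow_rpow_inv_natCast (inv_nonneg.2 hr) K.succ_ne_zero

/-- The optimal weight `w* = P/((K+1)(r−P)+P)` lies in `(0,1)`, satisfies the stationarity
equation, and the maximum of `R(w)` over `[0,1]` equals `log₂ r` and is attained at `w*`. -/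
theorem optimal_weight (P K : ℕ) (hP : 1 ≤ P) (r : ℝ) (hr : 0 < r)
    (hroot : r ^ (K + 1) - (P : ℝ) * r ^ K - 1 = 0) :
    let w : ℝ := (P : ℝ) / ((K + 1) * (r - P) + P)
    let R : ℝ → ℝ := fun w =>
      ((w * K + 1) / (K + 1)) * binH (w * (K + 1) / (w * K + 1)) + w * Real.logb 2 P
    0 < w ∧ w < 1 ∧
    ((w * K + 1) / (w * (K + 1))) * (((1 - w) / (w * K + 1)) ^ (1 / ((K : ℝ) + 1))) * P = 1 ∧
    R w = Real.logb 2 r ∧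
    IsMaxOn R (Set.Icc (0 : ℝ) 1) w := by
  intro w R
  have hP₀ : (0 : ℝ) < P := by exact_mod_cast hP
  have hPr : (P : ℝ) < r := lt_of_root hr hroot
  have hD : (0 : ℝ) < (K + 1) * (r - P) + P := by nlinarith
  have hw₀ : 0 < w := div_pos hP₀ hD
  have hratio := optimalWeight_ratio hr.ne' hD.ne'
  have hq₀ : (0 : ℝ) < P / r := div_pos hP₀ hr
  have hq₁ : (P : ℝ) / r < 1 := (div_lt_one hr).2 hPr
  have hRw : R w = logb 2 r :=
    (shiftRate_eq hw₀.le hratio).trans (majorant_eq_logb_root hP₀ hr hroot w)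
  refine ⟨hw₀, (div_lt_one hD).2 (by nlinarith), ?_, hRw, fun x ⟨hx₀, hx₁⟩ => ?_⟩
  · rw [one_sub_optimalWeight_div hr.ne' hD.ne', one_sub_div_of_root hr hroot,
      inv_pow_succ_rpow_inv hr.le, ← inv_div, hratio]
    field_simp
  · show shiftRate P K x ≤ R w
    rw [hRw, ← majorant_eq_logb_root hP₀ hr hroot x]
    exact shiftRate_le hx₀ hx₁ hq₀ hq₁
end

section
/- The maximum over w ∈ [0, 1/(K+1)] of the function f(w) = (1/(K+1))·H(w(K+1)) + w·log₂ P equals log₂(P+1)/(K+1), attained at w = P/((P+1)(K+1)). -/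
open Real Set

lemma binH_eq_binEntropy_div_log_two (p : ℝ) : binH p = binEntropy p / log 2 := by
  simp only [binH, binEntropy, logb, log_inv]
  ring

lemma binH_add_mul_logb_eq_qaryEntropy (n : ℕ) (p : ℝ) :
    binH p + p * logb 2 n = qaryEntropy (n + 1) p / log 2 := by
  simp only [binH_eq_binEntropy_div_log_two, qaryEntropy, logb]
  push_cast
  ring_nf

lemma isMaxOn_qaryEntropy {q : ℕ} (hq : 2 ≤ q) :
    IsMaxOn (qaryEntropy q) (Icc 0 1) (1 - 1 / q) :=
  isMaxOn_Icc_of_mono_anti (qaryEntropy_strictMonoOn hq).monotoneOn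
    (qaryEntropy_strictAntiOn hq).antitoneOn

lemma qaryEntropy_one_sub_inv (q : ℕ) : qaryEntropy q (1 - 1 / q) = log q := by
  rcases Nat.lt_or_ge q 2 with hq | hq
  · interval_cases q <;> simp [qaryEntropy]
  have hq' : (2 : ℝ) ≤ q := by exact_mod_cast hq
  have h1 : 1 - 1 / (q : ℝ) = (q - 1) / q := by field_simp
  have h2 : 1 - (q - 1) / (q : ℝ) = 1 / q := by field_simp; ring
  simp only [qaryEntropy, binEntropy, h1, h2]
  push_cast
  rw [inv_div, one_div, inv_inv, log_div (by linarith) (by linarith)]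
  field_simp
  ring

/-- The maximum over `w ∈ [0, 1/(K+1)]` of `f(w) = (1/(K+1))·H(w(K+1)) + w·log₂ P` equals
`log₂(P+1)/(K+1)`, attained at `w = P/((P+1)(K+1))`. -/
theorem queue_low_weight_max (P K : ℕ) (hP : 1 ≤ P) :
    let f : ℝ → ℝ := fun w => (1 / ((K : ℝ) + 1)) * binH (w * (K + 1)) + w * Real.logb 2 P
    let w : ℝ := (P : ℝ) / (((P : ℝ) + 1) * ((K : ℝ) + 1))
    f w = Real.logb 2 ((P : ℝ) + 1) / ((K : ℝ) + 1) ∧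
    IsMaxOn f (Set.Icc (0 : ℝ) (1 / ((K : ℝ) + 1))) w := by
  intro f w
  have hK : (0 : ℝ) < K + 1 := by positivity
  have hf (x : ℝ) : f x = qaryEntropy (P + 1) (x * (K + 1)) / log 2 / (K + 1) := by
    rw [← binH_add_mul_logb_eq_qaryEntropy]
    simp only [f]
    field_simp
  have hw : w * (K + 1) = 1 - 1 / ((P + 1 : ℕ) : ℝ) := by
    simp only [w]
    push_cast
    field_simp
    ring
  have hmaps : MapsTo (· * ((K : ℝ) + 1)) (Icc 0 (1 / (K + 1))) (Icc 0 1) := fun _ hx =>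
    ⟨mul_nonneg hx.1 hK.le, (le_div_iff₀ hK).1 hx.2⟩
  have hmax := (isMaxOn_qaryEntropy (by omega : 2 ≤ P + 1)).comp_mapsTo hmaps hw
  refine ⟨?_, fun x hx => ?_⟩
  · rw [hf, hw, qaryEntropy_one_sub_inv, logb, Nat.cast_succ]
  · change f x ≤ f w
    rw [hf, hf]
    gcongr
    exact hmax hx
end

section
/- Let P ≥ 2 be fixed real, and for real K ≥ 0 let r(K) > P be the unique positive root of x^K(x − P) = 1, and define w*(K) = P/((K+1)(r(K)−P) + P). Then (K+1)(r(K)−P) is strictly decreasing in K with limit 0 as K → ∞; consequently w*(K) is strictly increasing with lim_{K→∞} w*(K) = 1. -/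
open Filter Real

/-!
With `t = r(K) - P`, the root equation reads `t = r(K)^(-K)`, so `t ∈ (0, 1]`, `t` decreases
strictly in `K`, and `K = -log t / log (P + t)`. Hence `(K + 1)(r(K) - P) = scaledGap P t`
with `scaledGap P t = t - t log t / log (P + t)`, and it suffices that `scaledGap P` is strictly
increasing on `(0, 1]`. With `A = log (P + t)`, its derivative at `t` has the sign of
`A² - A - log t · (A - t / (P + t))`: this is clearly positive when `A ≥ 1`, and `A < 1` forces
`t < e - 2`, where `-log t ≥ 1 - t` and `A ≥ log 2 + t / (2 + t)` are enough.
The limit follows from `t ≤ 2^(-K)`.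
-/

noncomputable def scaledGap (P t : ℝ) : ℝ := t - t * log t / log (P + t)

lemma hasDerivAt_scaledGap {P t : ℝ} (hP : 1 ≤ P) (ht : 0 < t) :
    HasDerivAt (scaledGap P)
      ((log (P + t) ^ 2 - log (P + t) - log t * (log (P + t) - t / (P + t))) / log (P + t) ^ 2)
      t := by
  have hPt : 0 < P + t := by linarith
  have hA : log (P + t) ≠ 0 := (log_pos (by linarith)).ne'
  have hlog : HasDerivAt (fun s => log (P + s)) (P + t)⁻¹ t := by
    simpa using ((hasDerivAt_id t).const_add P).log hPt.ne'
  have h := (hasDerivAt_id t).sub (((hasDerivAt_id t).mul (hasDerivAt_log ht.ne')).div hlog hA)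
  refine h.congr_deriv ?_
  simp only [id, one_mul, Pi.mul_apply]
  field_simp
  ring

lemma log_two_add_div_le_log {P t : ℝ} (hP : 2 ≤ P) (ht : 0 ≤ t) :
    log 2 + t / (2 + t) ≤ log (P + t) := by
  have h := one_sub_inv_le_log_of_pos (show 0 < (2 + t) / 2 by positivity)
  rw [log_div (by positivity) two_ne_zero, inv_div] at h
  have h' : 1 - 2 / (2 + t) = t / (2 + t) := by field_simp; ring
  linarith [log_le_log (by positivity) (by linarith : 2 + t ≤ P + t)]

lemma scaledGap_deriv_numerator_pos {P t : ℝ} (hP : 2 ≤ P) (ht₀ : 0 < t) (ht₁ : t < 1) :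
    0 < log (P + t) ^ 2 - log (P + t) - log t * (log (P + t) - t / (P + t)) := by
  have hA := log_two_add_div_le_log hP ht₀.le
  set A := log (P + t)
  have hlogt : log t < 0 := log_neg ht₀ ht₁
  have hq : t / (P + t) ≤ t / (2 + t) := by gcongr
  have hu : t / (2 + t) < 1 / 2 := by rw [div_lt_iff₀ (by linarith)]; linarith
  have hlog2 := log_two_gt_d9
  rcases le_or_gt 1 A with hA1 | hA1
  · nlinarith [mul_pos (neg_pos.2 hlogt) (by linarith : 0 < A - t / (P + t))]
  · have hte : t < 0.7183 := by
      have : P + t < exp 1 := by rw [← exp_lt_exp, exp_log (by linarith)] at hA1; exact hA1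
      linarith [exp_one_lt_d9]
    have hb : 1 - t ≤ -log t := by linarith [log_le_sub_one_of_pos ht₀]
    set u := t / (2 + t)
    have hu0 : 0 ≤ u := by positivity
    have hut : u * (2 + t) = t := by simp only [u]; field_simp
    nlinarith [mul_le_mul hb (by linarith : A - u ≤ A - t / (P + t)) (by linarith) (by linarith),
      mul_nonneg (by linarith : 0 ≤ A - log 2 - u) (by linarith : 0 ≤ A + log 2 + u - 1)]

lemma scaledGap_strictMonoOn {P : ℝ} (hP : 2 ≤ P) :
    StrictMonoOn (scaledGap P) (Set.Ioc 0 1) := by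
  have hderiv (t : ℝ) (ht : 0 < t) := hasDerivAt_scaledGap (by linarith : 1 ≤ P) ht
  refine strictMonoOn_of_deriv_pos (convex_Ioc 0 1)
    (fun t ht => (hderiv t ht.1).continuousAt.continuousWithinAt) fun t ht => ?_
  rw [interior_Ioc] at ht
  rw [(hderiv t ht.1).deriv]
  exact div_pos (scaledGap_deriv_numerator_pos hP ht.1 ht.2)
    (pow_pos (log_pos (by linarith [ht.1])) 2)

def IsShiftRoot (P K x : ℝ) : Prop := P < x ∧ x ^ K * (x - P) = 1

namespace IsShiftRoot

variable {P K x : ℝ}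

lemma sub_eq_inv_rpow (h : IsShiftRoot P K x) : x - P = (x ^ K)⁻¹ :=
  eq_inv_of_mul_eq_one_right h.2

lemma add_one_mul_sub_eq_scaledGap (hP : 1 ≤ P) (h : IsShiftRoot P K x) :
    (K + 1) * (x - P) = scaledGap P (x - P) := by
  have hx : 1 < x := hP.trans_lt h.1
  have hlog : log (x - P) = -K * log x := by
    rw [h.sub_eq_inv_rpow, log_inv, log_rpow (by linarith)]; ring
  have hlog_ne : log x ≠ 0 := (log_pos hx).ne'
  rw [scaledGap, add_sub_cancel, hlog]
  field_simp
  ring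

lemma sub_le_inv_two_rpow (hP : 2 ≤ P) (hK : 0 ≤ K) (h : IsShiftRoot P K x) :
    x - P ≤ (2 ^ K)⁻¹ := by
  rw [h.sub_eq_inv_rpow]
  exact inv_anti₀ (by positivity) (rpow_le_rpow zero_le_two (by linarith [h.1]) hK)

lemma sub_mem_Ioc (hP : 2 ≤ P) (hK : 0 ≤ K) (h : IsShiftRoot P K x) : x - P ∈ Set.Ioc 0 1 :=
  ⟨sub_pos.2 h.1,
    (h.sub_le_inv_two_rpow hP hK).trans (inv_le_one_of_one_le₀ (one_le_rpow one_le_two hK))⟩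

lemma lt_of_exponent_lt {K' x' : ℝ} (hP : 1 ≤ P) (hK : 0 ≤ K) (hKK' : K < K')
    (h : IsShiftRoot P K x) (h' : IsShiftRoot P K' x') : x' < x := by
  by_contra! hxx'
  have hpow : x ^ K < x' ^ K' :=
    (rpow_le_rpow (by linarith [h.1]) hxx' hK).trans_lt
      (rpow_lt_rpow_of_exponent_lt (by linarith [h'.1]) hKK')
  have := inv_strictAnti₀ (by linarith [rpow_pos_of_pos (by linarith [h.1] : 0 < x) K]) hpow
  rw [← h.sub_eq_inv_rpow, ← h'.sub_eq_inv_rpow] at this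
  linarith

end IsShiftRoot

lemma tendsto_add_one_mul_inv_two_rpow :
    Tendsto (fun K : ℝ => (K + 1) * (2 ^ K)⁻¹) atTop (nhds 0) := by
  have hlog2 : 0 < log 2 := log_pos one_lt_two
  have h := (tendsto_rpow_mul_exp_neg_mul_atTop_nhds_zero 1 _ hlog2).add
    (tendsto_rpow_mul_exp_neg_mul_atTop_nhds_zero 0 _ hlog2)
  rw [add_zero] at h
  refine h.congr fun K => ?_
  rw [rpow_one, rpow_zero, rpow_def_of_pos two_pos, ← exp_neg]
  ring_nf

lemma StrictAntiOn.div_add_const {f : ℝ → ℝ} {s : Set ℝ} {c : ℝ} (hf : StrictAntiOn f s)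
    (hc : 0 < c) (hf₀ : ∀ x ∈ s, 0 ≤ f x) : StrictMonoOn (fun x => c / (f x + c)) s :=
  fun _ hx _ hy hxy =>
    div_lt_div_of_pos_left hc (by linarith [hf₀ _ hy]) (by linarith [hf hx hy hxy])

lemma Filter.Tendsto.div_add_const_nhds_one {α : Type*} {l : Filter α} {f : α → ℝ} {c : ℝ}
    (hf : Tendsto f l (nhds 0)) (hc : c ≠ 0) : Tendsto (fun x => c / (f x + c)) l (nhds 1) := by
  have h := (tendsto_const_nhds (x := c)).div (hf.add_const c) (by simpa using hc)
  rwa [zero_add, div_self hc] at h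

/-- For fixed real `P ≥ 2`, with `r(K) > P` the unique positive root of `x^K(x−P) = 1`, the
function `(K+1)(r(K)−P)` is strictly decreasing to `0`, hence
`w*(K) = P/((K+1)(r(K)−P)+P)` is strictly increasing with limit `1`. -/
theorem optimal_weight_as_function_of_K (P : ℝ) (hP : 2 ≤ P) (r : ℝ → ℝ)
    (hr : ∀ K : ℝ, 0 ≤ K → P < r K ∧ (r K) ^ K * (r K - P) = 1) :
    StrictAntiOn (fun K : ℝ => (K + 1) * (r K - P)) (Set.Ici 0) ∧
    Tendsto (fun K : ℝ => (K + 1) * (r K - P)) atTop (nhds 0) ∧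
    StrictMonoOn (fun K : ℝ => P / ((K + 1) * (r K - P) + P)) (Set.Ici 0) ∧
    Tendsto (fun K : ℝ => P / ((K + 1) * (r K - P) + P)) atTop (nhds 1) := by
  have hroot : ∀ K ∈ Set.Ici (0 : ℝ), IsShiftRoot P K (r K) := hr
  have hanti : StrictAntiOn (fun K : ℝ => (K + 1) * (r K - P)) (Set.Ici 0) := by
    intro K₁ hK₁ K₂ hK₂ hlt
    have hP₁ : 1 ≤ P := by linarith
    simp only [(hroot K₁ hK₁).add_one_mul_sub_eq_scaledGap hP₁,
      (hroot K₂ hK₂).add_one_mul_sub_eq_scaledGap hP₁]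
    exact scaledGap_strictMonoOn hP ((hroot K₂ hK₂).sub_mem_Ioc hP hK₂)
      ((hroot K₁ hK₁).sub_mem_Ioc hP hK₁)
      (sub_lt_sub_right ((hroot K₁ hK₁).lt_of_exponent_lt hP₁ hK₁ hlt (hroot K₂ hK₂)) P)
  have hnonneg : ∀ K ∈ Set.Ici (0 : ℝ), 0 ≤ (K + 1) * (r K - P) := fun K hK =>
    mul_nonneg (by linarith [Set.mem_Ici.1 hK]) ((hroot K hK).sub_mem_Ioc hP hK).1.le
  have hlim : Tendsto (fun K : ℝ => (K + 1) * (r K - P)) atTop (nhds 0) := by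
    refine tendsto_of_tendsto_of_tendsto_of_le_of_le' tendsto_const_nhds
      tendsto_add_one_mul_inv_two_rpow ?_ ?_ <;>
      filter_upwards [eventually_ge_atTop 0] with K hK
    · exact hnonneg K hK
    · exact mul_le_mul_of_nonneg_left ((hroot K hK).sub_le_inv_two_rpow hP hK) (by linarith)
  exact ⟨hanti, hlim, hanti.div_add_const (by linarith) hnonneg,
    hlim.div_add_const_nhds_one (by linarith)⟩
end
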